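/- arXiv:2209.08720 — 2 statements merged into one kernel-verified Lean document; each statement's English description precedes it below -/
import Mathlib

section
/- Let G be a finite supersolvable group and p a prime. Then G/F_p(G) is abelian of exponent dividing p−1, where F_p(G) is the p-nilpotent radical of G. -/
/-- A group is supersolvable if it has a normal series `1 = H 0 ≤ ⋯ ≤ H n = G`
with each term normal in `G` and each successive quotient cyclic. -/
def IsSupersolvable (G : Type*) [Group G] : Prop :=
  ∃ (n : ℕ) (c : Fin (n + 1) → Subgroup G),
    c 0 = ⊥ ∧ c (Fin.last n) = ⊤ ∧ (∀ i, (c i).Normal) ∧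
    ∀ i : Fin n, ∃ x : G, c i.succ = c i.castSucc ⊔ Subgroup.closure {x}

/-- A finite group is `p`-nilpotent if it has a normal `p`-complement: a normal
subgroup of order coprime to `p` whose index is a power of `p`. -/
def IsPNilpotent (p : ℕ) (G : Type*) [Group G] : Prop :=
  ∃ K : Subgroup G, K.Normal ∧ Nat.Coprime p (Nat.card K) ∧ ∃ n : ℕ, K.index = p ^ n

/-- The `p`-nilpotent radical `F_p(G)`: the subgroup generated by (i.e. the join of)
all normal `p`-nilpotent subgroups of `G`. -/
def pNilpotentRadical (p : ℕ) (G : Type*) [Group G] : Subgroup G :=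
  ⨆ (N : Subgroup G) (_ : N.Normal ∧ IsPNilpotent p ↥N), N

open scoped commutatorElement

/-!
Induct on `|G|`. A nontrivial supersolvable group has a normal subgroup `A = ⟨y⟩` of prime
order `q`; by induction `G ⧸ A` has a normal `p`-nilpotent subgroup containing all commutators
and `(p - 1)`-st powers, and we let `M` be its preimage. If `q ≠ p`, then `M` is `p`-nilpotent
because `A` is a `p'`-group. If `q = p`, then `G` acts on `A` through `Aut A ≃ (ZMod p)ˣ`, which
is abelian of order `p - 1`, so `N = M ⊓ C_G(A)` still contains the commutators and
`(p - 1)`-st powers. Now `A` is central in `N`, so on the preimage `K ≤ N` of the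
`p`-complement of `N ⧸ A` the transfer `K → A`, `g ↦ g ^ [K : A]`, is a homomorphism, and its
kernel is a normal `p`-complement of `N`.
-/
open Subgroup

namespace IsSupersolvable

variable {G : Type*} [Group G]

theorem of_surjective {H : Type*} [Group H] (hG : IsSupersolvable G) (f : G →* H)
    (hf : Function.Surjective f) : IsSupersolvable H := by
  obtain ⟨n, c, h0, hl, hn, hs⟩ := hG
  refine ⟨n, fun i => (c i).map f, by simp [h0], by simp [hl, map_top_of_surjective f hf],
    fun i => (hn i).map f hf, fun i => ?_⟩
  obtain ⟨x, hx⟩ := hs i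
  exact ⟨f x, by
    dsimp only
    rw [hx, Subgroup.map_sup, MonoidHom.map_closure, Set.image_singleton]⟩

theorem exists_ne_one_zpowers_normal [Nontrivial G] (hG : IsSupersolvable G) :
    ∃ g : G, g ≠ 1 ∧ (zpowers g).Normal := by
  obtain ⟨n, c, h0, hl, hn, hs⟩ := hG
  by_contra! h
  have hbot : ∀ i, c i = ⊥ := by
    intro i
    induction i using Fin.induction with
    | zero => exact h0
    | succ i ih =>
      obtain ⟨x, hx⟩ := hs i
      rw [ih, bot_sup_eq, ← zpowers_eq_closure] at hx
      by_cases hx1 : x = 1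
      · rw [hx, hx1, zpowers_one_eq_bot]
      · exact absurd (hx ▸ hn i.succ) (h x hx1)
  exact bot_ne_top ((hbot _).symm.trans hl)

end IsSupersolvable

theorem Subgroup.Normal.zpowers_pow {G : Type*} [Group G] {g : G} (hg : (zpowers g).Normal)
    (n : ℕ) : (zpowers (g ^ n)).Normal := by
  refine ⟨fun a ha x => ?_⟩
  obtain ⟨j, rfl⟩ := mem_zpowers_iff.mp ha
  obtain ⟨k, hk⟩ := mem_zpowers_iff.mp (hg.conj_mem g (mem_zpowers g) x)
  refine mem_zpowers_iff.mpr ⟨k * j, ?_⟩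
  rw [← conj_zpow, ← conj_pow, ← hk, ← zpow_natCast, ← zpow_natCast, ← zpow_mul, ← zpow_mul,
    ← zpow_mul]
  ring_nf

theorem IsSupersolvable.exists_prime_orderOf_zpowers_normal {G : Type*} [Group G] [Finite G]
    [Nontrivial G] (hG : IsSupersolvable G) :
    ∃ y : G, (orderOf y).Prime ∧ (zpowers y).Normal := by
  obtain ⟨g, hg1, hg⟩ := hG.exists_ne_one_zpowers_normal
  have hq : (orderOf g).minFac.Prime := Nat.minFac_prime (orderOf_eq_one_iff.not.mpr hg1)
  refine ⟨g ^ (orderOf g / (orderOf g).minFac), ?_, hg.zpowers_pow _⟩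
  rwa [orderOf_pow_orderOf_div (orderOf_pos g).ne' (Nat.minFac_dvd _)]

section MulAut

variable {G : Type*} [Group G] {A : Subgroup G} [A.Normal]

theorem mem_centralizer_of_conjNormal_eq_one {g : G} (hg : MulAut.conjNormal (H := A) g = 1) :
    g ∈ centralizer (A : Set G) := by
  refine mem_centralizer_iff.mpr fun a ha => ?_
  have h := congrArg Subtype.val (DFunLike.congr_fun hg ⟨a, ha⟩)
  rw [MulAut.conjNormal_apply, MulAut.one_apply] at h
  exact (mul_inv_eq_iff_eq_mul.mp h).symm

variable (A)

theorem commutator_mem_centralizer_of_isCyclic [IsCyclic A] (x y : G) :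
    ⁅x, y⁆ ∈ centralizer (A : Set G) := by
  refine mem_centralizer_of_conjNormal_eq_one ((IsCyclic.mulAutMulEquiv A).injective ?_)
  rw [map_commutatorElement, map_commutatorElement, map_one, commutatorElement_eq_one_iff_commute]
  exact Commute.all _ _

theorem pow_card_mulAut_mem_centralizer (x : G) :
    x ^ Nat.card (MulAut A) ∈ centralizer (A : Set G) :=
  mem_centralizer_of_conjNormal_eq_one (by rw [map_pow, pow_card_eq_one'])

end MulAut

section Card

variable {G H : Type*} [Group G] [Group H]

theorem MonoidHom.card_ker_mul_card_of_surjective (f : G →* H) (hf : Function.Surjective f) :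
    Nat.card f.ker * Nat.card H = Nat.card G := by
  rw [← card_mul_index f.ker, index_ker f, f.range_eq_top_of_surjective hf, card_top]

theorem MonoidHom.ker_subgroupComap (f : G →* H) (K : Subgroup H) :
    (f.subgroupComap K).ker = f.ker.subgroupOf (K.comap f) := by
  ext x
  rw [MonoidHom.mem_ker, mem_subgroupOf, MonoidHom.mem_ker]
  exact Subtype.ext_iff

theorem MonoidHom.card_ker_subgroupComap (f : G →* H) (K : Subgroup H) :
    Nat.card (f.subgroupComap K).ker = Nat.card f.ker := by
  rw [f.ker_subgroupComap]
  exact Nat.card_congr (subgroupOfEquivOfLe (f.ker_le_comap K)).toEquiv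

theorem Subgroup.card_comap_of_surjective {f : G →* H} (hf : Function.Surjective f)
    (K : Subgroup H) : Nat.card (K.comap f) = Nat.card f.ker * Nat.card K := by
  rw [← f.card_ker_subgroupComap K,
    MonoidHom.card_ker_mul_card_of_surjective _ (f.subgroupComap_surjective_of_surjective K hf)]

end Card

section TransferPow

open scoped IsMulCommutative

variable {G : Type*} [Group G] {A : Subgroup G}

theorem Subgroup.isMulCommutative_of_le_center (hA : A ≤ center G) : IsMulCommutative A :=
  ⟨⟨fun a b => Subtype.ext (mem_center_iff.mp (hA b.2) a)⟩⟩

noncomputable def transferPowOfLeCenter (hA : A ≤ center G) [A.FiniteIndex] : G →* A :=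
  haveI := isMulCommutative_of_le_center hA
  MonoidHom.transfer (MonoidHom.id A)

theorem coe_transferPowOfLeCenter (hA : A ≤ center G) [A.FiniteIndex] (g : G) :
    (transferPowOfLeCenter hA g : G) = g ^ A.index := by
  have := isMulCommutative_of_le_center hA
  rw [transferPowOfLeCenter, MonoidHom.transfer_eq_pow _ g fun k g₀ hk => ?_]
  · rfl
  · calc g₀⁻¹ * g ^ k * g₀ = g₀ * (g₀⁻¹ * g ^ k * g₀) * g₀⁻¹ := by
          rw [mem_center_iff.mp (hA hk) g₀, mul_inv_cancel_right]
      _ = g ^ k := by group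

theorem transferPowOfLeCenter_surjective (hA : A ≤ center G) [A.FiniteIndex]
    (hcop : (Nat.card A).Coprime A.index) : Function.Surjective (transferPowOfLeCenter hA) := by
  intro a
  refine ⟨(powCoprime hcop).symm a, Subtype.ext ?_⟩
  rw [coe_transferPowOfLeCenter, ← coe_pow]
  exact congrArg Subtype.val ((powCoprime hcop).apply_symm_apply a)

theorem card_ker_transferPowOfLeCenter [Finite G] (hA : A ≤ center G)
    (hcop : (Nat.card A).Coprime A.index) :
    Nat.card (transferPowOfLeCenter hA).ker = A.index := by
  have h := MonoidHom.card_ker_mul_card_of_surjective _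
    (transferPowOfLeCenter_surjective hA hcop)
  rw [← card_mul_index A, mul_comm (Nat.card A)] at h
  exact Nat.eq_of_mul_eq_mul_right Nat.card_pos h

theorem normal_map_ker_transferPowOfLeCenter {L : Subgroup G} [L.Normal] {A : Subgroup L}
    (hA : A ≤ center L) [A.FiniteIndex] :
    ((transferPowOfLeCenter hA).ker.map L.subtype).Normal := by
  refine ⟨fun x hx g => ?_⟩
  obtain ⟨y, hy, rfl⟩ := hx
  refine ⟨⟨g * y * g⁻¹, ‹L.Normal›.conj_mem _ y.2 g⟩, ?_, rfl⟩
  rw [SetLike.mem_coe, MonoidHom.mem_ker, ← Subtype.val_inj, coe_transferPowOfLeCenter] at hy ⊢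
  apply Subtype.ext
  rw [Subgroup.coe_pow, Subgroup.coe_mk, conj_pow, ← Subgroup.coe_pow, hy]
  simp

end TransferPow

namespace IsPNilpotent

variable {p : ℕ} {G H : Type*} [Group G] [Group H]

theorem of_coprime_card (h : p.Coprime (Nat.card G)) : IsPNilpotent p G :=
  ⟨⊤, normal_top, by rwa [card_top], 0, by rw [index_top, pow_zero]⟩

theorem of_injective (hp : p.Prime) (hG : IsPNilpotent p G) (f : H →* G)
    (hf : Function.Injective f) : IsPNilpotent p H := by
  obtain ⟨K, hK, hcop, n, hn⟩ := hG
  refine ⟨K.comap f, hK.comap f, hcop.coprime_dvd_right (card_comap_dvd_of_injective K f hf), ?_⟩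
  have hdvd : (K.comap f).index ∣ p ^ n := by
    rw [index_comap, ← hn]
    exact relIndex_dvd_index_of_normal K f.range
  obtain ⟨k, -, hk⟩ := (Nat.dvd_prime_pow hp).mp hdvd
  exact ⟨k, hk⟩

theorem of_surjective_of_coprime_card_ker (hG : IsPNilpotent p G) {f : H →* G}
    (hf : Function.Surjective f) (hker : p.Coprime (Nat.card f.ker)) : IsPNilpotent p H := by
  obtain ⟨K, hK, hcop, n, hn⟩ := hG
  refine ⟨K.comap f, hK.comap f, ?_, n, by rw [index_comap_of_surjective K hf, hn]⟩
  rw [card_comap_of_surjective hf]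
  exact hker.mul_right hcop

theorem of_surjective_of_ker_le_center [Finite H] (hp : p.Prime) (hG : IsPNilpotent p G)
    {f : H →* G} (hf : Function.Surjective f) (hcenter : f.ker ≤ center H)
    (hker : IsPGroup p f.ker) : IsPNilpotent p H := by
  have : Fact p.Prime := ⟨hp⟩
  have : Finite G := Finite.of_surjective f hf
  obtain ⟨k, hk⟩ := IsPGroup.iff_card.mp hker
  obtain ⟨K, hK, hcop, n, hn⟩ := hG
  have hφ := f.subgroupComap_surjective_of_surjective K hf
  set A := (f.subgroupComap K).ker
  have hA : A ≤ center (K.comap f) := fun a ha => mem_center_iff.mpr fun b => by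
    change a ∈ (f.subgroupComap K).ker at ha
    rw [f.ker_subgroupComap, mem_subgroupOf] at ha
    exact Subtype.ext (mem_center_iff.mp (hcenter ha) b)
  have hAindex : A.index = Nat.card K := by
    rw [index_ker, MonoidHom.range_eq_top_of_surjective _ hφ, card_top]
  have hAcop : (Nat.card A).Coprime A.index := by
    rw [f.card_ker_subgroupComap, hk, hAindex]
    exact hcop.pow_left k
  have hQ : Nat.card ((transferPowOfLeCenter hA).ker.map (K.comap f).subtype) = Nat.card K := by
    rw [card_map_of_injective (subtype_injective _), card_ker_transferPowOfLeCenter hA hAcop,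
      hAindex]
  refine ⟨_, normal_map_ker_transferPowOfLeCenter hA, by rwa [hQ], k + n, ?_⟩
  apply Nat.eq_of_mul_eq_mul_left (Nat.card_pos (α := K))
  rw [← hQ, card_mul_index, ← card_mul_index (K.comap f), card_comap_of_surjective hf,
    index_comap_of_surjective K hf, hk, hn, hQ]
  ring

end IsPNilpotent

/-- `G ⧸ N` is abelian of exponent dividing `e`. -/
def Subgroup.ContainsCommutatorsAndPowers {G : Type*} [Group G] (N : Subgroup G) (e : ℕ) :
    Prop :=
  (∀ x y : G, ⁅x, y⁆ ∈ N) ∧ ∀ x : G, x ^ e ∈ N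

namespace Subgroup.ContainsCommutatorsAndPowers

variable {G H : Type*} [Group G] [Group H] {N N' : Subgroup H} {e : ℕ}

theorem top : (⊤ : Subgroup G).ContainsCommutatorsAndPowers e :=
  ⟨fun _ _ => mem_top _, fun _ => mem_top _⟩

theorem comap (hN : N.ContainsCommutatorsAndPowers e) (f : G →* H) :
    (N.comap f).ContainsCommutatorsAndPowers e :=
  ⟨fun x y => by rw [mem_comap, map_commutatorElement]; exact hN.1 _ _,
    fun x => by rw [mem_comap, map_pow]; exact hN.2 _⟩

theorem inf (hN : N.ContainsCommutatorsAndPowers e) (hN' : N'.ContainsCommutatorsAndPowers e) :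
    (N ⊓ N').ContainsCommutatorsAndPowers e :=
  ⟨fun x y => ⟨hN.1 x y, hN'.1 x y⟩, fun x => ⟨hN.2 x, hN'.2 x⟩⟩

end Subgroup.ContainsCommutatorsAndPowers

theorem Subgroup.containsCommutatorsAndPowers_centralizer {G : Type*} [Group G]
    (A : Subgroup G) [A.Normal] [IsCyclic A] [Finite A] :
    (centralizer (A : Set G)).ContainsCommutatorsAndPowers (Nat.card A).totient :=
  ⟨fun x y => commutator_mem_centralizer_of_isCyclic A x y, fun x => by
    simpa only [IsCyclic.card_mulAut] using pow_card_mulAut_mem_centralizer A x⟩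

theorem IsPNilpotent.comap_inf_centralizer {p : ℕ} (hp : p.Prime) {G : Type*} [Group G]
    [Finite G] {A : Subgroup G} [A.Normal] {Nb : Subgroup (G ⧸ A)} (hNb : IsPNilpotent p Nb)
    (hA : IsPGroup p A) :
    IsPNilpotent p ↥(Nb.comap (QuotientGroup.mk' A) ⊓ centralizer (A : Set G)) := by
  set N := Nb.comap (QuotientGroup.mk' A) ⊓ centralizer (A : Set G)
  have hle : N.map (QuotientGroup.mk' A) ≤ Nb := map_le_iff_le_comap.mpr inf_le_left
  refine .of_surjective_of_ker_le_center hp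
    (hNb.of_injective hp (inclusion hle) (inclusion_injective hle))
    ((QuotientGroup.mk' A).subgroupMap_surjective N) ?_ ?_ <;>
    rw [ker_subgroupMap, QuotientGroup.ker_mk']
  · intro z hz
    exact mem_center_iff.mpr fun w =>
      Subtype.ext (mem_centralizer_iff.mp (mem_inf.mp w.2).2 z hz).symm
  · exact hA.comap_of_injective N.subtype N.subtype_injective

theorem exists_normal_isPNilpotent_of_quotient {p : ℕ} (hp : p.Prime) {G : Type*} [Group G]
    [Finite G] {y : G} (hy : (orderOf y).Prime) [(zpowers y).Normal]
    {Nb : Subgroup (G ⧸ zpowers y)} (hNb : Nb.Normal) (hNbp : IsPNilpotent p Nb)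
    (hNbc : Nb.ContainsCommutatorsAndPowers (p - 1)) :
    ∃ N : Subgroup G, N.Normal ∧ IsPNilpotent p N ∧ N.ContainsCommutatorsAndPowers (p - 1) := by
  set f := QuotientGroup.mk' (zpowers y)
  by_cases hyp : orderOf y = p
  · have hcard : Nat.card (zpowers y) = p := by rw [Nat.card_zpowers, hyp]
    refine ⟨Nb.comap f ⊓ centralizer (zpowers y : Set G), inferInstance,
      hNbp.comap_inf_centralizer hp (IsPGroup.of_card (n := 1) (by rw [hcard, pow_one])),
      (hNbc.comap f).inf ?_⟩
    simpa only [hcard, Nat.totient_prime hp] using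
      containsCommutatorsAndPowers_centralizer (zpowers y)
  · refine ⟨Nb.comap f, hNb.comap f, hNbp.of_surjective_of_coprime_card_ker
      (f.subgroupComap_surjective_of_surjective Nb (QuotientGroup.mk'_surjective _)) ?_,
      hNbc.comap f⟩
    rw [MonoidHom.card_ker_subgroupComap, QuotientGroup.ker_mk', Nat.card_zpowers,
      Nat.coprime_primes hp hy]
    exact Ne.symm hyp

theorem IsSupersolvable.exists_normal_isPNilpotent_containsCommutatorsAndPowers {p : ℕ}
    (hp : p.Prime) {G : Type*} [Group G] [Finite G] (hG : IsSupersolvable G) :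
    ∃ N : Subgroup G, N.Normal ∧ IsPNilpotent p N ∧ N.ContainsCommutatorsAndPowers (p - 1) := by
  induction h : Nat.card G using Nat.strong_induction_on generalizing G with
  | _ n ih =>
  rcases subsingleton_or_nontrivial G with _ | _
  · refine ⟨⊤, normal_top, .of_coprime_card ?_, .top⟩
    rw [card_top, Nat.card_of_subsingleton (1 : G)]
    exact Nat.coprime_one_right p
  obtain ⟨y, hy, hyn⟩ := hG.exists_prime_orderOf_zpowers_normal
  have hlt : Nat.card (G ⧸ zpowers y) < n := by
    rw [← h, card_eq_card_quotient_mul_card_subgroup (zpowers y), Nat.card_zpowers]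
    exact lt_mul_of_one_lt_right Nat.card_pos hy.one_lt
  obtain ⟨Nb, hNb, hNbp, hNbc⟩ :=
    ih _ hlt (hG.of_surjective _ (QuotientGroup.mk'_surjective (zpowers y))) rfl
  exact exists_normal_isPNilpotent_of_quotient hp hy hNb hNbp hNbc

/-- If `G` is a finite supersolvable group and `p` a prime, then `G/F_p(G)` is
abelian of exponent dividing `p-1` (expressed by: all commutators and all
`(p-1)`-st powers lie in `F_p(G)`). -/
theorem quotient_pNilpotentRadical_abelian {G : Type*} [Group G] [Finite G]
    (hG : IsSupersolvable G) (p : ℕ) (hp : p.Prime) :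
    (∀ x y : G, ⁅x, y⁆ ∈ pNilpotentRadical p G) ∧
      ∀ x : G, x ^ (p - 1) ∈ pNilpotentRadical p G := by
  obtain ⟨N, hN, hNp, hNc⟩ := hG.exists_normal_isPNilpotent_containsCommutatorsAndPowers hp
  have hle : N ≤ pNilpotentRadical p G :=
    le_iSup₂ (f := fun (N : Subgroup G) (_ : N.Normal ∧ IsPNilpotent p N) => N) N ⟨hN, hNp⟩
  exact ⟨fun x y => hle (hNc.1 x y), fun x => hle (hNc.2 x)⟩
end

section
/- Let F be a group and H a subgroup. Suppose that for every prime p, every finite group S admitting a normal p-subgroup with quotient abelian of exponent dividing p−1, and every homomorphism ψ: F → S, one has ψ(g) ∈ ψ(H). Then for every finite supersolvable group G and every homomorphism φ: F → G, one has φ(g) ∈ φ(H). In other words, the pro-supersolvable closure of H equals the intersection over all primes p of the pro-H_p closures of H. -/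
/-!
Induct on `|G|`. A finite supersolvable group `G` has a normal subgroup `A` of prime order `r`,
and by induction applied to `G ⧸ A`, `φ g ∈ A ⊔ φ(H)`. Moreover `G` has a normal subgroup `W` of
order prime to `r` with `G ⧸ W ∈ H_r`, so the hypothesis gives `φ g ∈ W ⊔ φ(H)`. Writing
`φ g = a k = w k'`, the element `a w⁻¹` lies in `φ(H)`; as `A ∩ W = 1`, `a` and `w` commute, and
`a` is a power of `a w⁻¹` because their orders are coprime.

The subgroup `W` is also found by induction on `|G|`. If `G` has a nontrivial normal
`r'`-subgroup `T`, pull back the one of `G ⧸ T`. Otherwise `A` has order `r`; let `X ⊇ A` be the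
preimage of the one of `G ⧸ A` and `C = C_G(A) ∩ X`. Then `A` is central in `C` of index prime to
`r`, the transfer `C → A` is `x ↦ x ^ [C : A]`, its kernel is a normal `r'`-subgroup of `G`,
hence trivial, so `C = A`. Since `G ⧸ C_G(A)` embeds in `Aut A ≅ (ZMod r)ˣ`, `W = 1` works.
-/

universe u

open scoped commutatorElement

open Subgroup QuotientGroup

section

variable {G G' : Type*} [Group G] [Group G']

theorem Subgroup.Normal.zpowers_of_mem {x y : G} (hx : (zpowers x).Normal)
    (hy : y ∈ zpowers x) : (zpowers y).Normal := by
  refine ⟨fun b hb g => ?_⟩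
  obtain ⟨t, rfl⟩ := mem_zpowers_iff.mp hy
  obtain ⟨k, rfl⟩ := mem_zpowers_iff.mp hb
  obtain ⟨s, hs⟩ := mem_zpowers_iff.mp (hx.conj_mem x (mem_zpowers x) g)
  refine mem_zpowers_iff.mpr ⟨s * k, ?_⟩
  rw [← conj_zpow, ← conj_zpow, ← hs, ← zpow_mul, ← zpow_mul, ← zpow_mul, mul_left_comm]

theorem Subgroup.card_quotient_lt [Finite G] {T : Subgroup G} [T.Normal] (hT : T ≠ ⊥) :
    Nat.card (G ⧸ T) < Nat.card G := by
  rw [T.card_eq_card_quotient_mul_card_subgroup]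
  exact lt_mul_of_one_lt_right Nat.card_pos (T.one_lt_card_iff_ne_bot.mpr hT)

theorem QuotientGroup.relIndex_comap_mk' (N : Subgroup G) [N.Normal] (W : Subgroup (G ⧸ N)) :
    N.relIndex (W.comap (mk' N)) = Nat.card W := by
  have hN := relIndex_ker (K := W.comap (mk' N)) (mk' N)
  rwa [ker_mk', map_comap_eq_self_of_surjective (mk'_surjective N)] at hN

theorem QuotientGroup.card_comap_mk' (N : Subgroup G) [N.Normal] (W : Subgroup (G ⧸ N)) :
    Nat.card (W.comap (mk' N)) = Nat.card N * Nat.card W := by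
  rw [← relIndex_comap_mk', ← relIndex_bot_left, ← relIndex_bot_left]
  exact (relIndex_mul_relIndex _ _ _ bot_le (le_comap_mk' N W)).symm

theorem Commute.mem_zpowers_mul_of_coprime {a w : G} (hc : Commute a w)
    (hcop : (orderOf a).Coprime (orderOf w)) : a ∈ zpowers (a * w) := by
  refine mem_zpowers_iff.mpr ⟨orderOf w * Nat.gcdB (orderOf a) (orderOf w), ?_⟩
  have hbez := Nat.gcd_eq_gcd_ab (orderOf a) (orderOf w)
  rw [hcop.gcd_eq_one, Nat.cast_one] at hbez
  rw [hc.mul_zpow, zpow_mul w, zpow_natCast, pow_orderOf_eq_one, one_zpow, mul_one,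
    show (orderOf w : ℤ) * _ = 1 + orderOf a * -Nat.gcdA (orderOf a) (orderOf w) by linarith,
    zpow_add, zpow_one, zpow_mul, zpow_natCast, pow_orderOf_eq_one, one_zpow, mul_one]

theorem Subgroup.mem_of_mem_sup_of_mem_sup {A W K : Subgroup G} [A.Normal] [W.Normal]
    (hAW : (Nat.card A).Coprime (Nat.card W)) {x : G} (hA : x ∈ A ⊔ K) (hW : x ∈ W ⊔ K) :
    x ∈ K := by
  obtain ⟨a, ha, k, hk, rfl⟩ := mem_sup_of_normal_left.mp hA
  obtain ⟨w, hw, k', hk', hx⟩ := mem_sup_of_normal_left.mp hW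
  have hc : Commute a w⁻¹ := commute_of_normal_of_disjoint A W inferInstance inferInstance
    (disjoint_of_coprime_natCard hAW) a w⁻¹ ha (W.inv_mem hw)
  have hcop : (orderOf a).Coprime (orderOf w⁻¹) := by
    rw [orderOf_inv]
    exact (hAW.coprime_dvd_left (A.orderOf_dvd_natCard ha)).coprime_dvd_right
      (W.orderOf_dvd_natCard hw)
  have haw : a * w⁻¹ ∈ K := by
    rw [hc.eq, show w⁻¹ * a = k' * k⁻¹ by rw [eq_mul_inv_iff_mul_eq, mul_assoc, ← hx]; group]
    exact K.mul_mem hk' (K.inv_mem hk)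
  exact K.mul_mem ((zpowers_le.mpr haw) (hc.mem_zpowers_mul_of_coprime hcop)) hk

theorem IsSupersolvable.of_surjective_s14 (f : G →* G') (hf : Function.Surjective f)
    (hG : IsSupersolvable G) : IsSupersolvable G' := by
  obtain ⟨n, c, h0, hlast, hnorm, hstep⟩ := hG
  refine ⟨n, fun i => (c i).map f, by simp [h0], by simp [hlast, map_top_of_surjective f hf],
    fun i => (hnorm i).map f hf, fun i => ?_⟩
  obtain ⟨x, hx⟩ := hstep i
  exact ⟨f x, by
    simp only [hx, Subgroup.map_sup, MonoidHom.map_closure, Set.image_singleton]⟩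

theorem IsSupersolvable.exists_normal_prime_card [Finite G] [Nontrivial G]
    (hG : IsSupersolvable G) : ∃ A : Subgroup G, A.Normal ∧ (Nat.card A).Prime := by
  obtain ⟨n, c, h0, hlast, hnorm, hstep⟩ := hG
  have hcyc : ∀ i : Fin (n + 1), c i ≠ ⊥ → ∃ x : G, x ≠ 1 ∧ (zpowers x).Normal := by
    refine Fin.induction (fun h => absurd h0 h) fun i ih hi => ?_
    by_cases hc : c i.castSucc = ⊥
    · obtain ⟨x, hx⟩ := hstep i
      rw [hc, bot_sup_eq, ← zpowers_eq_closure] at hx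
      exact ⟨x, fun h1 => hi (by rw [hx, h1, zpowers_one_eq_bot]), hx ▸ hnorm _⟩
    · exact ih hc
  obtain ⟨x, hx1, hxn⟩ := hcyc (Fin.last n) (hlast ▸ top_ne_bot)
  obtain ⟨r, hr, hrx⟩ := Nat.exists_prime_and_dvd (mt orderOf_eq_one_iff.mp hx1)
  refine ⟨zpowers (x ^ (orderOf x / r)), hxn.zpowers_of_mem (pow_mem (mem_zpowers x) _), ?_⟩
  rwa [Nat.card_zpowers, orderOf_pow_orderOf_div (orderOf_pos x).ne' hrx]

def IsHpGroup (p : ℕ) (S : Type*) [Group S] : Prop :=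
  ∃ N : Subgroup S, N.Normal ∧ IsPGroup p N ∧ (∀ x y : S, ⁅x, y⁆ ∈ N) ∧ ∀ x : S, x ^ (p - 1) ∈ N

/-- `G ⧸ W ∈ H_p`, witnessed inside `G` by the preimage `P` of the normal `p`-subgroup. -/
def Subgroup.HasHpQuotient (p : ℕ) (W : Subgroup G) : Prop :=
  ∃ P : Subgroup G, P.Normal ∧ (∀ x ∈ P, ∃ m : ℕ, x ^ p ^ m ∈ W) ∧
    (∀ x y : G, ⁅x, y⁆ ∈ P) ∧ ∀ x : G, x ^ (p - 1) ∈ P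

namespace Subgroup.HasHpQuotient

variable {p : ℕ} {W : Subgroup G}

theorem isHpGroup [W.Normal] (hW : W.HasHpQuotient p) : IsHpGroup p (G ⧸ W) := by
  obtain ⟨P, hPn, hPp, hPc, hPpow⟩ := hW
  refine ⟨P.map (mk' W), hPn.map _ (mk'_surjective W), ?_, fun x y => ?_, fun x => ?_⟩
  · rintro ⟨_, x, hx, rfl⟩
    obtain ⟨m, hm⟩ := hPp x hx
    exact ⟨m, Subtype.ext ((eq_one_iff (x ^ p ^ m)).mpr hm)⟩
  · obtain ⟨x, rfl⟩ := mk'_surjective W x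
    obtain ⟨y, rfl⟩ := mk'_surjective W y
    exact ⟨_, hPc x y, map_commutatorElement _ _ _⟩
  · obtain ⟨x, rfl⟩ := mk'_surjective W x
    exact ⟨_, hPpow x, map_pow _ _ _⟩

theorem comap {W : Subgroup G'} (hW : W.HasHpQuotient p) (f : G →* G') :
    (W.comap f).HasHpQuotient p := by
  obtain ⟨P, hPn, hPp, hPc, hPpow⟩ := hW
  refine ⟨P.comap f, hPn.comap f, fun x hx => ?_, fun x y => ?_, fun x => ?_⟩
  · obtain ⟨m, hm⟩ := hPp (f x) hx
    exact ⟨m, by rwa [mem_comap, map_pow]⟩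
  · rw [mem_comap, map_commutatorElement]
    exact hPc _ _
  · rw [mem_comap, map_pow]
    exact hPpow _

end Subgroup.HasHpQuotient

theorem Subgroup.mem_centralizer_of_conjNormal_eq_one {A : Subgroup G} [A.Normal] {x : G}
    (hx : MulAut.conjNormal x = (1 : MulAut A)) : x ∈ centralizer A := by
  refine mem_centralizer_iff.mpr fun a ha => ?_
  have hxa := congrArg Subtype.val (DFunLike.congr_fun hx ⟨a, ha⟩)
  exact (mul_inv_eq_iff_eq_mul.mp hxa).symm

theorem Subgroup.commutatorElement_mem_centralizer {A : Subgroup G} [A.Normal] [IsCyclic A]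
    (x y : G) : ⁅x, y⁆ ∈ centralizer A := by
  refine mem_centralizer_of_conjNormal_eq_one ?_
  rw [map_commutatorElement, commutatorElement_eq_one_iff_commute]
  exact (IsCyclic.mulAutMulEquiv A).injective (by simp only [map_mul]; exact mul_comm _ _)

theorem Subgroup.pow_card_sub_one_mem_centralizer {A : Subgroup G} [A.Normal]
    (hA : (Nat.card A).Prime) (x : G) : x ^ (Nat.card A - 1) ∈ centralizer A := by
  have : Fact (Nat.card A).Prime := ⟨hA⟩
  have : Finite A := Nat.finite_of_card_ne_zero hA.ne_zero
  have : IsCyclic A := isCyclic_of_prime_card rfl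
  refine mem_centralizer_of_conjNormal_eq_one ?_
  rw [map_pow, ← Nat.totient_prime hA, ← IsCyclic.card_mulAut]
  exact pow_card_eq_one'

open scoped IsMulCommutative in
theorem Subgroup.mul_pow_index_of_le_center {A : Subgroup G} [A.FiniteIndex]
    (hA : A ≤ center G) (x y : G) : (x * y) ^ A.index = x ^ A.index * y ^ A.index := by
  have hpow (g : G) : ((MonoidHom.transfer (inclusion hA) g : center G) : G) = g ^ A.index := by
    rw [MonoidHom.transfer_eq_pow (inclusion hA) g fun k g₀ hk => by
      rw [← mul_right_inj, ← (hA hk).comm, mul_inv_cancel_right]]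
    rfl
  simpa only [hpow, coe_mul] using
    congrArg Subtype.val (map_mul (MonoidHom.transfer (inclusion hA)) x y)

theorem Subgroup.le_of_le_centralizer_of_coprime [Finite G] {A C : Subgroup G} [A.Normal]
    [C.Normal] (hAC : A ≤ C) (hCA : C ≤ centralizer A)
    (hcop : (Nat.card A).Coprime (A.relIndex C))
    (hG : ∀ T : Subgroup G, T.Normal → (Nat.card T).Coprime (Nat.card A) → T = ⊥) :
    C ≤ A := by
  set m := A.relIndex C
  have hcentral : A.subgroupOf C ≤ center C := fun a ha =>
    mem_center_iff.mpr fun x => Subtype.ext (hCA x.2 a ha).symm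
  obtain ⟨K, hK⟩ : ∃ K : Subgroup G, ∀ x, x ∈ K ↔ x ∈ C ∧ x ^ m = 1 :=
    ⟨{ carrier := {x | x ∈ C ∧ x ^ m = 1}
       one_mem' := ⟨C.one_mem, one_pow m⟩
       mul_mem' := fun {x y} hx hy => ⟨C.mul_mem hx.1 hy.1, by
         have := congrArg Subtype.val
           (mul_pow_index_of_le_center hcentral ⟨x, hx.1⟩ ⟨y, hy.1⟩)
         simp only [coe_mul, coe_pow] at this
         rw [show (A.subgroupOf C).index = m from rfl] at this
         rw [this, hx.2, hy.2, one_mul]⟩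
       inv_mem' := fun {x} hx => ⟨C.inv_mem hx.1, by rw [inv_pow, hx.2, inv_one]⟩ },
      fun _ => Iff.rfl⟩
  have hKn : K.Normal := ⟨fun x hx g => by
    rw [hK] at hx ⊢
    exact ⟨‹C.Normal›.conj_mem x hx.1 g, by rw [conj_pow, hx.2, mul_one, mul_inv_cancel]⟩⟩
  have hKcop : (Nat.card K).Coprime (Nat.card A) := Nat.coprime_of_dvd fun ℓ hℓ hK' hA => by
    have : Fact ℓ.Prime := ⟨hℓ⟩
    obtain ⟨⟨x, hxK⟩, hx⟩ := exists_prime_orderOf_dvd_card' ℓ hK'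
    rw [orderOf_mk] at hx
    have hℓm : ℓ ∣ m := hx ▸ orderOf_dvd_of_pow_eq_one ((hK x).mp hxK).2
    exact hℓ.one_lt.ne' (Nat.eq_one_of_dvd_coprimes hcop hA hℓm)
  have hK1 : K = ⊥ := hG K hKn hKcop
  intro x hx
  obtain ⟨a, ha⟩ := (powCoprime hcop).surjective ⟨x ^ m, A.pow_relIndex_mem hx⟩
  have hxa : Commute x (a : G)⁻¹ := (show Commute (a : G) x from hCA hx a a.2).symm.inv_right
  have hxaK : x * (a : G)⁻¹ ∈ K := (hK _).mpr ⟨C.mul_mem hx (C.inv_mem (hAC a.2)), by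
    rw [hxa.mul_pow, inv_pow, ← coe_pow, ← powCoprime_apply hcop, ha, mul_inv_cancel]⟩
  rw [hK1, mem_bot, mul_inv_eq_one] at hxaK
  exact hxaK ▸ a.2

theorem Subgroup.hasHpQuotient_bot [Finite G] {q : ℕ} (hq : q.Prime) {A : Subgroup G} [A.Normal]
    (hA : Nat.card A = q) (hG : ∀ T : Subgroup G, T.Normal → (Nat.card T).Coprime q → T = ⊥)
    {W : Subgroup (G ⧸ A)} [W.Normal] (hWq : (Nat.card W).Coprime q) (hW : W.HasHpQuotient q) :
    (⊥ : Subgroup G).HasHpQuotient q := by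
  subst hA
  have : Fact (Nat.card A).Prime := ⟨hq⟩
  have : IsCyclic A := isCyclic_of_prime_card rfl
  set X := W.comap (mk' A)
  have hAX : A ≤ centralizer A ⊓ X := le_inf (le_centralizer A) (le_comap_mk' A W)
  have hcop : (Nat.card A).Coprime (A.relIndex (centralizer A ⊓ X)) := by
    refine hWq.symm.coprime_dvd_right ?_
    rw [← relIndex_comap_mk', ← relIndex_mul_relIndex _ _ _ hAX inf_le_right]
    exact dvd_mul_right _ _
  have hCA : centralizer A ⊓ X ≤ A := le_of_le_centralizer_of_coprime hAX inf_le_left hcop hG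
  obtain ⟨P, hPn, hPp, hPc, hPpow⟩ := hW.comap (mk' A)
  refine ⟨centralizer A ⊓ P, inferInstance, fun x hx => ?_,
    fun x y => ⟨commutatorElement_mem_centralizer x y, hPc x y⟩,
    fun x => ⟨pow_card_sub_one_mem_centralizer hq x, hPpow x⟩⟩
  obtain ⟨m, hm⟩ := hPp x hx.2
  have hxA : x ^ Nat.card A ^ m ∈ A := hCA ⟨pow_mem hx.1 _, hm⟩
  refine ⟨m + 1, ?_⟩
  rw [pow_succ, pow_mul, mem_bot]
  exact orderOf_dvd_iff_pow_eq_one.mp (A.orderOf_dvd_natCard hxA)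

theorem IsSupersolvable.exists_normal_coprime_hasHpQuotient [Finite G] (hG : IsSupersolvable G)
    {q : ℕ} (hq : q.Prime) :
    ∃ W : Subgroup G, W.Normal ∧ (Nat.card W).Coprime q ∧ W.HasHpQuotient q := by
  induction hn : Nat.card G using Nat.strong_induction_on generalizing G with
  | _ n ih =>
  have ih_quot (T : Subgroup G) [T.Normal] (hT : T ≠ ⊥) : ∃ W : Subgroup (G ⧸ T),
      W.Normal ∧ (Nat.card W).Coprime q ∧ W.HasHpQuotient q :=
    ih _ (hn ▸ card_quotient_lt hT) (hG.of_surjective_s14 _ (mk'_surjective T)) rfl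
  by_cases hT : ∃ T : Subgroup G, T.Normal ∧ T ≠ ⊥ ∧ (Nat.card T).Coprime q
  · obtain ⟨T, hTn, hT1, hTq⟩ := hT
    obtain ⟨W, hWn, hWq, hW⟩ := ih_quot T hT1
    exact ⟨W.comap (mk' T), hWn.comap _, (card_comap_mk' T W).symm ▸ hTq.mul_left hWq, hW.comap _⟩
  refine ⟨⊥, inferInstance, by simp, ?_⟩
  have hT_bot (T : Subgroup G) (hTn : T.Normal) (hTq : (Nat.card T).Coprime q) : T = ⊥ :=
    by_contra fun hT1 => hT ⟨T, hTn, hT1, hTq⟩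
  rcases subsingleton_or_nontrivial G with hG1 | hG1
  · exact ⟨⊤, inferInstance, fun x _ => ⟨0, by simp [Subsingleton.elim x 1]⟩,
      fun _ _ => mem_top _, fun _ => mem_top _⟩
  obtain ⟨A, hAn, hA⟩ := hG.exists_normal_prime_card
  have hAq : Nat.card A = q := by
    by_contra hne
    exact hA.ne_one (card_eq_one.mpr (hT_bot A hAn ((Nat.coprime_primes hA hq).mpr hne)))
  obtain ⟨W, hWn, hWq, hW⟩ := ih_quot A (A.one_lt_card_iff_ne_bot.mp hA.one_lt)
  exact hasHpQuotient_bot hq hAq hT_bot hWq hW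

theorem QuotientGroup.mem_sup_of_mk'_comp_mem_map {F : Type*} [Group F] {N : Subgroup G}
    [N.Normal] {φ : F →* G} {H : Subgroup F} {g : F}
    (hg : (mk' N).comp φ g ∈ H.map ((mk' N).comp φ)) : φ g ∈ N ⊔ H.map φ := by
  rwa [← comap_map_mk', mem_comap, Subgroup.map_map]

end

/-- If `g ∈ F` satisfies `ψ(g) ∈ ψ(H)` for every homomorphism `ψ` from `F` to a
finite group having a normal `p`-subgroup with quotient abelian of exponent
dividing `p-1` (for every prime `p`), then `φ(g) ∈ φ(H)` for every homomorphism
`φ` from `F` to a finite supersolvable group.  In other words, the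
pro-supersolvable closure of `H` equals the intersection of the pro-`H_p`
closures of `H` over all primes `p`. -/
theorem supersolvable_closure_eq_iInter_hp_closure {F : Type u} [Group F]
    (H : Subgroup F) (g : F)
    (h : ∀ p : ℕ, p.Prime → ∀ (S : Type u) [Group S] [Finite S],
      (∃ N : Subgroup S, N.Normal ∧ IsPGroup p N ∧
        (∀ x y : S, ⁅x, y⁆ ∈ N) ∧ (∀ x : S, x ^ (p - 1) ∈ N)) →
      ∀ ψ : F →* S, ψ g ∈ H.map ψ) :
    ∀ (G : Type u) [Group G] [Finite G], IsSupersolvable G →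
      ∀ φ : F →* G, φ g ∈ H.map φ := by
  intro G _ _ hG φ
  induction hn : Nat.card G using Nat.strong_induction_on generalizing G with
  | _ n ih =>
  rcases subsingleton_or_nontrivial G with hG1 | hG1
  · exact ⟨1, H.one_mem, Subsingleton.elim _ _⟩
  obtain ⟨A, hAn, hA⟩ := hG.exists_normal_prime_card
  obtain ⟨W, hWn, hWA, hW⟩ := hG.exists_normal_coprime_hasHpQuotient hA
  have hgA : φ g ∈ A ⊔ H.map φ := mem_sup_of_mk'_comp_mem_map <|
    ih _ (hn ▸ card_quotient_lt (A.one_lt_card_iff_ne_bot.mp hA.one_lt)) (G ⧸ A)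
      (hG.of_surjective_s14 _ (mk'_surjective A)) _ rfl
  have hgW : φ g ∈ W ⊔ H.map φ := mem_sup_of_mk'_comp_mem_map <|
    h _ hA (G ⧸ W) hW.isHpGroup _
  exact mem_of_mem_sup_of_mem_sup hWA.symm hgA hgW
end
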